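/- Let (R, m, k) be a commutative Noetherian local ring of positive depth. Then there exist elements x_1, ..., x_n in m, each a non zero-divisor on R, such that the residue field k is isomorphic to the tensor product (R/x_1R) ⊗_R ⋯ ⊗_R (R/x_nR). -/

import Mathlib

universe u
open TensorProduct

variable (R : Type u) [CommRing R]

/-- Projective dimension at most `n`. -/
def pdLE (R : Type u) [CommRing R] :
    ℕ → ∀ (M : Type u) [AddCommGroup M] [Module R M], Prop
  | 0, M, _, _ => Module.Projective R M
  | n+1, M, _, _ => Module.Projective R M ∨
      ∃ (F : Type u) (_ : AddCommGroup F) (_ : Module R F) (f : F →ₗ[R] M),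
        Module.Projective R F ∧ Function.Surjective f ∧
          pdLE R n (LinearMap.ker f)

/-- Injective dimension at most `n`. -/
def idLE (R : Type u) [CommRing R] :
    ℕ → ∀ (M : Type u) [AddCommGroup M] [Module R M], Prop
  | 0, M, _, _ => Module.Injective R M
  | n+1, M, _, _ => Module.Injective R M ∨
      ∃ (I : Type u) (_ : AddCommGroup I) (_ : Module R I) (f : M →ₗ[R] I),
        Module.Injective R I ∧ Function.Injective f ∧
          idLE R n (I ⧸ LinearMap.range f)

/-- `Tor_i^R(M,N)` vanishes. -/
abbrev TorVanish (i : ℕ) (M N : Type u) [AddCommGroup M] [Module R M]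
    [AddCommGroup N] [Module R N] : Prop :=
  Subsingleton (((CategoryTheory.Tor (ModuleCat.{u} R) i).obj
      (ModuleCat.of R M)).obj (ModuleCat.of R N))

/-- `Ext^i_R(M,N)` vanishes. -/
abbrev ExtVanish (i : ℕ) (M N : Type u) [AddCommGroup M] [Module R M]
    [AddCommGroup N] [Module R N] : Prop :=
  Subsingleton (((Ext R (ModuleCat.{u} R) i).obj
      (Opposite.op (ModuleCat.of R M))).obj (ModuleCat.of R N))

/-- depth of the module `M` (w.r.t. ideal `J`) is at least `n`. -/
def depthGE (J : Ideal R) (n : ℕ) (M : Type u) [AddCommGroup M] [Module R M] : Prop :=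
  ∃ rs : List R, rs.length = n ∧ (∀ x ∈ rs, x ∈ J) ∧ RingTheory.Sequence.IsRegular M rs

/-- maximal Cohen-Macaulay module over a local ring -/
def IsMaximalCM [IsLocalRing R] (M : Type u) [AddCommGroup M] [Module R M] : Prop :=
  ∃ rs : List R, (∀ x ∈ rs, x ∈ IsLocalRing.maximalIdeal R) ∧
    RingTheory.Sequence.IsRegular M rs ∧ (rs.length : WithBot (WithTop ℕ)) = ringKrullDim R

def IsCMLocalRing [IsLocalRing R] : Prop := IsMaximalCM R R

/-- regular local ring: maximal ideal generated by a regular sequence -/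
def IsRegularLocalRing' [IsLocalRing R] : Prop :=
  ∃ rs : List R, RingTheory.Sequence.IsRegular R rs ∧
    Ideal.span {x | x ∈ rs} = IsLocalRing.maximalIdeal R

/-- canonical module of a Cohen-Macaulay local ring -/
def IsCanonicalModule [IsLocalRing R] (ω : Type u) [AddCommGroup ω] [Module R ω] : Prop :=
  Module.Finite R ω ∧ IsMaximalCM R ω ∧ (∃ n, idLE R n ω) ∧
    Function.Bijective (algebraMap R (Module.End R ω))

/-!
Let `x ∈ 𝔪` be regular. A zero divisor lies in one of the finitely many associated primes,
and no associated prime contains `x`. If a prime `p` contained both `y + x ^ k` and `y + x ^ l`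
with `k < l`, it would contain `x ^ k * (1 - x ^ (l - k))`, hence `x`, since the second factor
is a unit. By pigeonhole some `y + x ^ (k + 1)` is therefore regular, and perturbing a generating
family of `𝔪` in this way and adding `x` yields regular generators `z₁, …, zₙ` of `𝔪`. Finally
`R ⧸ (z₁, …, zₙ)` is the tensor product of the `R ⧸ (zᵢ)`: both are the coproduct of the
`R`-algebras `R ⧸ (zᵢ)`.
-/

open IsLocalRing PiTensorProduct

noncomputable def Ideal.quotientISupAlgEquivPiTensorProduct {R ι : Type*} [CommRing R]
    [Fintype ι] (I : ι → Ideal R) : (R ⧸ ⨆ i, I i) ≃ₐ[R] ⨂[R] i, R ⧸ I i := by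
  classical
  refine AlgEquiv.ofAlgHom
    (Ideal.Quotient.liftₐ _ (Algebra.ofId R _) fun r hr => ?_)
    (liftAlgHom ((MultilinearMap.mkPiAlgebra R ι (R ⧸ ⨆ i, I i)).compLinearMap
      fun i => (Ideal.Quotient.factorₐ R (le_iSup I i)).toLinearMap) ?_ ?_)
    (algHom_ext fun i => Ideal.Quotient.algHom_ext R (Subsingleton.elim _ _))
    (Ideal.Quotient.algHom_ext R (Subsingleton.elim _ _))
  · induction hr using Submodule.iSup_induction' with
    | mem i r hr =>
      rw [Algebra.ofId_apply, ← (singleAlgHom i).commutes r,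
        Ideal.Quotient.algebraMap_eq, Ideal.Quotient.eq_zero_iff_mem.mpr hr, map_zero]
    | zero => exact map_zero _
    | add r s _ _ hr hs => rw [map_add, hr, hs, add_zero]
  · simp
  · intro a b
    simp [Finset.prod_mul_distrib]

theorem Ideal.IsPrime.mem_of_add_pow_mem_of_add_pow_mem {R : Type*} [CommRing R] [IsLocalRing R]
    {p : Ideal R} (hp : p.IsPrime) {x y : R} (hx : x ∈ maximalIdeal R) {k l : ℕ} (hkl : k ≠ l)
    (hk : y + x ^ k ∈ p) (hl : y + x ^ l ∈ p) : x ∈ p := by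
  wlog hlt : k < l generalizing k l
  · exact this hkl.symm hl hk (hkl.lt_or_gt.resolve_left hlt)
  obtain ⟨d, rfl⟩ := Nat.exists_eq_add_of_lt hlt
  have hdiff : x ^ k * (1 - x ^ (d + 1)) ∈ p := by
    convert p.sub_mem hk hl using 1
    ring
  have hunit : IsUnit (1 - x ^ (d + 1)) :=
    isUnit_one_sub_self_of_mem_nonunits _ (Ideal.pow_mem_of_mem _ hx _ d.succ_pos)
  exact hp.mem_of_pow_mem k ((hp.mem_or_mem hdiff).resolve_right fun h => hp.ne_top
    (Ideal.eq_top_of_isUnit_mem _ h hunit))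

theorem exists_isSMulRegular_add_pow {R M : Type*} [CommRing R] [IsNoetherianRing R]
    [IsLocalRing R] [AddCommGroup M] [Module R M] [Module.Finite R M] {x : R}
    (hx : IsSMulRegular M x) (hxm : x ∈ maximalIdeal R) (y : R) :
    ∃ k, IsSMulRegular M (y + x ^ (k + 1)) := by
  have hzd (r : R) : r ∈ ⋃ p ∈ associatedPrimes R M, (p : Set R) ↔ ¬IsSMulRegular M r := by
    rw [biUnion_associatedPrimes_eq_compl_regular]; rfl
  by_contra! h
  have hmem (k : ℕ) : ∃ p : associatedPrimes R M, y + x ^ (k + 1) ∈ (p : Ideal R) := by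
    obtain ⟨p, hp, hyp⟩ := Set.mem_iUnion₂.mp ((hzd _).mpr (h k))
    exact ⟨⟨p, hp⟩, hyp⟩
  choose p hp using hmem
  have := (associatedPrimes.finite R M).to_subtype
  obtain ⟨k, l, hne, hkl⟩ := Finite.exists_ne_map_eq_of_infinite p
  have hxp : x ∈ (p k : Ideal R) := (p k).2.isPrime.mem_of_add_pow_mem_of_add_pow_mem hxm
    (by omega) (hp k) (hkl ▸ hp l)
  exact (hzd x).mp (Set.mem_biUnion (p k).2 hxp) hx

theorem IsLocalRing.exists_isSMulRegular_span_eq_maximalIdeal {R : Type*} [CommRing R]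
    [IsNoetherianRing R] [IsLocalRing R] {x : R} (hxm : x ∈ maximalIdeal R)
    (hx : IsSMulRegular R x) :
    ∃ (n : ℕ) (z : Fin n → R), 0 < n ∧ (∀ i, z i ∈ maximalIdeal R ∧ IsSMulRegular R (z i)) ∧
      Ideal.span (Set.range z) = maximalIdeal R := by
  obtain ⟨r, y, hy⟩ :=
    Submodule.fg_iff_exists_fin_generating_family.mp (IsNoetherian.noetherian (maximalIdeal R))
  choose k hk using fun i => exists_isSMulRegular_add_pow hx hxm (y i)
  have hym (i : Fin r) : y i ∈ maximalIdeal R := hy ▸ Submodule.subset_span ⟨i, rfl⟩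
  set z : Fin (r + 1) → R := Fin.cons x fun i => y i + x ^ (k i + 1)
  have hz : ∀ i, z i ∈ maximalIdeal R ∧ IsSMulRegular R (z i) := by
    refine Fin.cases ⟨hxm, hx⟩ fun i => ⟨?_, hk i⟩
    exact add_mem (hym i) (Ideal.pow_mem_of_mem _ hxm _ (k i).succ_pos)
  refine ⟨r + 1, z, r.succ_pos, hz, le_antisymm ?_ ?_⟩
  · exact Ideal.span_le.mpr (Set.range_subset_iff.mpr fun i => (hz i).1)
  · rw [← hy, Submodule.span_le, Set.range_subset_iff]
    intro i
    have hsucc : y i + x ^ (k i + 1) ∈ Ideal.span (Set.range z) := Ideal.subset_span ⟨i.succ, rfl⟩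
    have hzero : x ∈ Ideal.span (Set.range z) := Ideal.subset_span ⟨0, rfl⟩
    simpa [pow_succ] using sub_mem hsucc (Ideal.mul_mem_left _ (x ^ k i) hzero)

open scoped TensorProduct in
/-- Over a Noetherian local ring of positive depth, the residue field is a tensor
product of quotients by non zero-divisors. -/
theorem stmt_2 (R : Type u) [CommRing R] [IsNoetherianRing R] [IsLocalRing R]
    (hdepth : ∃ x ∈ IsLocalRing.maximalIdeal R, IsSMulRegular R x) :
    ∃ (n : ℕ) (x : Fin n → R), 0 < n ∧
      (∀ i, x i ∈ IsLocalRing.maximalIdeal R ∧ IsSMulRegular R (x i)) ∧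
      Nonempty ((R ⧸ IsLocalRing.maximalIdeal R) ≃ₗ[R]
        (⨂[R] i : Fin n, R ⧸ Ideal.span {x i})) := by
  obtain ⟨x, hxm, hx⟩ := hdepth
  obtain ⟨n, z, hn, hz, hspan⟩ := exists_isSMulRegular_span_eq_maximalIdeal hxm hx
  have hsup : ⨆ i, Ideal.span {z i} = maximalIdeal R := hspan ▸ Submodule.span_range_eq_iSup.symm
  exact ⟨n, z, hn, hz, ⟨((Ideal.quotientEquivAlgOfEq R hsup.symm).trans
    (Ideal.quotientISupAlgEquivPiTensorProduct _)).toLinearEquiv⟩⟩
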